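/- arXiv:1502.05745 — 3 statements merged into one kernel-verified Lean document; each statement's English description precedes it below -/
import Mathlib

section
/- For every natural number n ≥ 2, the sum ∑_{x=1}^{n-1} (n(n-1))/(2x(n-x)) is at most 2·n·log₂(n). -/
/-!
Splitting `n(n-1) / (2x(n-x)) = (n-1)/2 · (1/x + 1/(n-x))` into partial fractions and using
the symmetry `x ↦ n - x` of the range, the sum is exactly `(n-1) H_{n-1}`. Then
`H_{n-1} ≤ 1 + ln n ≤ 2 log₂ n`, because `log₂ n ≥ 1` and `log₂ n ≥ ln n` for `n ≥ 2`.
-/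

open Finset Real

theorem Finset.sum_Icc_one_pred_reflect {M : Type*} [AddCommMonoid M] (f : ℕ → M) (n : ℕ) :
    ∑ x ∈ Icc 1 (n - 1), f (n - x) = ∑ x ∈ Icc 1 (n - 1), f x :=
  sum_nbij' (n - ·) (n - ·) (by intro; simp only [mem_Icc]; omega)
    (by intro; simp only [mem_Icc]; omega) (by intro; simp only [mem_Icc]; omega)
    (by intro; simp only [mem_Icc]; omega) (fun _ _ ↦ rfl)

theorem sum_Icc_inv_eq_harmonic (n : ℕ) : ∑ x ∈ Icc 1 n, (x : ℝ)⁻¹ = harmonic n := by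
  simp only [harmonic_eq_sum_Icc, Rat.cast_sum, Rat.cast_inv, Rat.cast_natCast]

theorem sum_Icc_inv_sub_eq_harmonic (n : ℕ) :
    ∑ x ∈ Icc 1 (n - 1), ((n : ℝ) - x)⁻¹ = harmonic (n - 1) := by
  calc ∑ x ∈ Icc 1 (n - 1), ((n : ℝ) - x)⁻¹
      = ∑ x ∈ Icc 1 (n - 1), (((n - x : ℕ) : ℝ))⁻¹ :=
        sum_congr rfl fun x hx ↦ by
          rw [Nat.cast_sub (by simp only [mem_Icc] at hx; omega)]
    _ = ∑ x ∈ Icc 1 (n - 1), (x : ℝ)⁻¹ :=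
        sum_Icc_one_pred_reflect (fun x : ℕ ↦ (x : ℝ)⁻¹) n
    _ = harmonic (n - 1) := sum_Icc_inv_eq_harmonic (n - 1)

theorem mul_pred_div_two_mul_mul_sub {x y : ℝ} (hx : x ≠ 0) (hxy : x ≠ y) :
    y * (y - 1) / (2 * x * (y - x)) = (y - 1) / 2 * (x⁻¹ + (y - x)⁻¹) := by
  have hyx : y - x ≠ 0 := sub_ne_zero.mpr hxy.symm
  field_simp
  ring

theorem sum_Icc_mul_pred_div_eq_harmonic (n : ℕ) :
    ∑ x ∈ Icc 1 (n - 1), ((n : ℝ) * (n - 1)) / (2 * x * (n - x)) =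
      (n - 1) * harmonic (n - 1) := by
  have hsplit : ∀ x ∈ Icc 1 (n - 1), ((n : ℝ) * (n - 1)) / (2 * x * (n - x)) =
      ((n : ℝ) - 1) / 2 * ((x : ℝ)⁻¹ + ((n : ℝ) - x)⁻¹) := by
    intro x hx
    simp only [mem_Icc] at hx
    exact mul_pred_div_two_mul_mul_sub (by norm_cast; omega) (by norm_cast; omega)
  rw [sum_congr rfl hsplit, ← mul_sum, sum_add_distrib, sum_Icc_inv_eq_harmonic,
    sum_Icc_inv_sub_eq_harmonic]
  ring

theorem one_add_log_le_two_mul_logb_two {x : ℝ} (hx : 2 ≤ x) : 1 + log x ≤ 2 * logb 2 x := by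
  have hlog_two_pos : 0 < log 2 := log_pos one_lt_two
  have hone : 1 ≤ logb 2 x := by
    rw [le_logb_iff_rpow_le one_lt_two (by linarith), rpow_one]
    exact hx
  have hlog : log x ≤ logb 2 x :=
    le_div_self (log_nonneg (by linarith)) hlog_two_pos (log_two_lt_d9.le.trans (by norm_num))
  linarith

theorem harmonic_pred_le_two_mul_logb_two {n : ℕ} (hn : 2 ≤ n) :
    (harmonic (n - 1) : ℝ) ≤ 2 * logb 2 n := by
  calc (harmonic (n - 1) : ℝ) ≤ 1 + log ((n - 1 : ℕ) : ℝ) := harmonic_le_one_add_log _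
    _ ≤ 1 + log n := by
        gcongr
        · exact_mod_cast (by omega : 0 < n - 1)
        · exact_mod_cast Nat.sub_le n 1
    _ ≤ 2 * logb 2 n := one_add_log_le_two_mul_logb_two (by exact_mod_cast hn)

theorem stmt_0 (n : ℕ) (hn : 2 ≤ n) :
    ∑ x ∈ Finset.Icc 1 (n - 1), ((n : ℝ) * (n - 1)) / (2 * x * (n - x)) ≤
      2 * n * Real.logb 2 n := by
  have hharmonic_nonneg : (0 : ℝ) ≤ harmonic (n - 1) := by
    exact_mod_cast (harmonic_pos (by omega)).le
  calc ∑ x ∈ Icc 1 (n - 1), ((n : ℝ) * (n - 1)) / (2 * x * (n - x))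
      = (n - 1) * harmonic (n - 1) := sum_Icc_mul_pred_div_eq_harmonic n
    _ ≤ n * (2 * logb 2 n) :=
        mul_le_mul (by linarith) (harmonic_pred_le_two_mul_logb_two hn) hharmonic_nonneg
          (by positivity)
    _ = 2 * n * logb 2 n := by ring
end

section
/- Let update be the LM transition function on Q = {-m,…,-1,1,…,m+1} (m > 0), and let (x',y') = update(x,y). Then |x'| ≥ min(|x|, m); that is, a node's absolute value never decreases, except possibly from m+1 down to m. -/
def inQ (m x : ℤ) : Prop := (-m ≤ x ∧ x ≤ -1) ∨ (1 ≤ x ∧ x ≤ m + 1)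

def contend (m x y : ℤ) : ℤ :=
  if max |x| |y| = m + 1 then m else max |x| |y| + 1

def minion (m x y : ℤ) : ℤ :=
  if max |x| |y| = m + 1 then -m else -max |x| |y|

def update (m x y : ℤ) : ℤ × ℤ :=
  (if 0 < x ∧ |y| ≤ |x| then contend m x y else minion m x y,
   if 0 < y ∧ |x| ≤ |y| then contend m x y else minion m x y)

theorem min_max_abs_le_abs_contend (m x y : ℤ) : min (max |x| |y|) m ≤ |contend m x y| := by
  unfold contend
  split_ifs
  · exact (min_le_right _ _).trans (le_abs_self m)
  · exact (min_le_left _ _).trans ((lt_add_one _).le.trans (le_abs_self _))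

theorem min_max_abs_le_abs_minion (m x y : ℤ) : min (max |x| |y|) m ≤ |minion m x y| := by
  unfold minion
  split_ifs
  · exact (min_le_right _ _).trans (abs_neg m ▸ le_abs_self m)
  · exact (min_le_left _ _).trans (abs_neg (max |x| |y|) ▸ le_abs_self _)

theorem stmt_13_general (m : ℤ) (x y : ℤ) :
    min |x| m ≤ |(update m x y).1| := by
  have hmin : min |x| m ≤ min (max |x| |y|) m := min_le_min_right m (le_max_left _ _)
  simp only [update]
  split
  · exact hmin.trans (min_max_abs_le_abs_contend m x y)
  · exact hmin.trans (min_max_abs_le_abs_minion m x y)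

theorem stmt_13 (m : ℤ) (hm : 0 < m) (x y : ℤ) (hx : inQ m x) (hy : inQ m y) :
    min |x| m ≤ |(update m x y).1| :=
  stmt_13_general m x y
end

section
/- Let c : V → ℤ be a configuration of a finite nonempty set V of nodes, each with state in Q = {-m,…,-1,1,…,m+1}, and suppose every configuration reachable from c by applying the LM update rule to pairs of distinct nodes contains at least one node with positive state. If in c exactly one node v has c(v) > 0, then in every configuration reachable from c, v is the unique node with positive state. -/
/-- One interaction step between two distinct nodes of a configuration. -/
def Step (m : ℤ) {V : Type*} (c c' : V → ℤ) : Prop :=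
  ∃ u w : V, u ≠ w ∧
    c' u = (update m (c u) (c w)).1 ∧
    c' w = (update m (c u) (c w)).2 ∧
    ∀ z : V, z ≠ u → z ≠ w → c' z = c z

/-- Reachability: reflexive-transitive closure of the step relation. -/
def Reachable (m : ℤ) {V : Type*} (c c' : V → ℤ) : Prop :=
  Relation.ReflTransGen (Step m) c c'

/-!
A node can only come out of an interaction with a positive state if it went in with one:
otherwise the update gives it a `minion` state, which is never positive. So the set of positive nodes
never grows along a run, and since it is assumed never to become empty, it stays `{v}`.
-/

lemma minion_nonpos {m : ℤ} (hm : 0 ≤ m) (x y : ℤ) : minion m x y ≤ 0 := by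
  unfold minion
  split_ifs
  · linarith
  · have := le_max_left |x| |y|
    linarith [abs_nonneg x]

lemma pos_of_update_fst_pos {m x y : ℤ} (hm : 0 ≤ m) (h : 0 < (update m x y).1) : 0 < x := by
  by_contra hx
  have hmin : (update m x y).1 = minion m x y := if_neg fun hwin => hx hwin.1
  exact (minion_nonpos hm x y).not_gt (hmin ▸ h)

lemma pos_of_update_snd_pos {m x y : ℤ} (hm : 0 ≤ m) (h : 0 < (update m x y).2) : 0 < y := by
  by_contra hy
  have hmin : (update m x y).2 = minion m x y := if_neg fun hwin => hy hwin.1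
  exact (minion_nonpos hm x y).not_gt (hmin ▸ h)

lemma Step.pos_of_pos {m : ℤ} (hm : 0 ≤ m) {V : Type*} {c c' : V → ℤ} (h : Step m c c')
    {z : V} (hz : 0 < c' z) : 0 < c z := by
  obtain ⟨u, w, -, hu, hw, hrest⟩ := h
  by_cases hzu : z = u
  · subst hzu
    exact pos_of_update_fst_pos hm (hu ▸ hz)
  by_cases hzw : z = w
  · subst hzw
    exact pos_of_update_snd_pos hm (hw ▸ hz)
  exact hrest z hzu hzw ▸ hz

lemma Reachable.pos_of_pos {m : ℤ} (hm : 0 ≤ m) {V : Type*} {c c' : V → ℤ}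
    (h : Reachable m c c') {z : V} (hz : 0 < c' z) : 0 < c z := by
  induction h with
  | refl => exact hz
  | tail _ hstep ih => exact ih (hstep.pos_of_pos hm hz)

theorem stmt_15_general (m : ℤ) (hm : 0 < m) {V : Type*}
    (c : V → ℤ)
    (halways : ∀ c', Reachable m c c' → ∃ v, 0 < c' v)
    (v : V) (huniq : ∀ w, 0 < c w → w = v) :
    ∀ c', Reachable m c c' → 0 < c' v ∧ ∀ w, 0 < c' w → w = v := by
  intro c' hreach
  have hunique : ∀ w, 0 < c' w → w = v := fun w hw => huniq w (hreach.pos_of_pos hm.le hw)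
  obtain ⟨z, hz⟩ := halways c' hreach
  exact ⟨hunique z hz ▸ hz, hunique⟩

theorem stmt_15 (m : ℤ) (hm : 0 < m) {V : Type*} [Fintype V] [Nonempty V]
    (c : V → ℤ) (hQ : ∀ v, inQ m (c v))
    (halways : ∀ c', Reachable m c c' → ∃ v, 0 < c' v)
    (v : V) (hv : 0 < c v) (huniq : ∀ w, 0 < c w → w = v) :
    ∀ c', Reachable m c c' → 0 < c' v ∧ ∀ w, 0 < c' w → w = v :=
  stmt_15_general m hm c halways v huniq
end
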